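/- Let V₁, V₂, W₁, W₂ be real-valued random variables (on possibly different probability spaces pairing (V₁,W₁) and (V₂,W₂)) with finite third absolute moments, such that E[V₁] = E[V₂], Var(V₁) = Var(V₂), E[V₁+W₁] = E[V₂+W₂], Var(V₁+W₁) = Var(V₂+W₂). Then ζ₃(V₁+W₁, V₂+W₂) ≤ ζ₃(V₁, V₂) + ∑_{i=1}^{2} ( ‖V_i‖₃²‖W_i‖₃/2 + ‖V_i‖₃‖W_i‖₃²/2 + ‖W_i‖₃³/6 ), where ‖X‖₃ = E[|X|³]^{1/3}. -/

import Mathlib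

open MeasureTheory
open scoped ENNReal
/-- The class `F₃` of C² functions with 1-Lipschitz second derivative. -/
def F3 : Set (ℝ → ℝ) :=
  {f | ContDiff ℝ 2 f ∧ LipschitzWith 1 (deriv (deriv f))}

/-- The Zolotarev metric `ζ₃` between two laws on `ℝ`. -/
noncomputable def zeta3 (μ ν : Measure ℝ) : ℝ :=
  ⨆ f : F3, |(∫ x, f.1 x ∂μ) - ∫ x, f.1 x ∂ν|

/-- `L³` "norm" of a real random variable. -/
noncomputable def norm3 {Ω : Type*} [MeasurableSpace Ω] (P : Measure Ω)
    (X : Ω → ℝ) : ℝ :=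
  (∫ ω, |X ω| ^ 3 ∂P) ^ ((1 : ℝ) / 3)

lemma zsb_taylor_one {g g' : ℝ → ℝ} (hg : ∀ x, HasDerivAt g (g' x) x)
    (hL : LipschitzWith 1 g') (a s : ℝ) :
    |g (a + s) - g a - g' a * s| ≤ s ^ 2 / 2 := by
  have hcont : Continuous g' := hL.continuous
  have key : ∀ t : ℝ, HasDerivAt (fun t => g (a + t * s)) (g' (a + t * s) * s) t := by
    intro t
    have := (hg (a + t * s)).comp t (((hasDerivAt_id t).mul_const s).const_add a)
    simpa [Function.comp_def] using this
  have hci : Continuous fun t : ℝ => g' (a + t * s) * s := by continuity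
  have hint : (∫ t in (0:ℝ)..1, g' (a + t * s) * s) = g (a + s) - g a := by
    rw [intervalIntegral.integral_eq_sub_of_hasDerivAt (fun t _ => key t)
      (hci.intervalIntegrable 0 1)]
    norm_num
  have hsplit : g (a + s) - g a - g' a * s
      = ∫ t in (0:ℝ)..1, (g' (a + t * s) - g' a) * s := by
    have : (∫ t in (0:ℝ)..1, (g' (a + t * s) - g' a) * s)
        = (∫ t in (0:ℝ)..1, g' (a + t * s) * s) - ∫ t in (0:ℝ)..1, g' a * s := by
      rw [← intervalIntegral.integral_sub (hci.intervalIntegrable 0 1)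
        (intervalIntegrable_const)]
      congr 1; ext t; ring
    rw [this, hint]; simp
  rw [hsplit, ← Real.norm_eq_abs]
  have hb : ∀ᵐ t ∂(volume.restrict (Set.uIoc (0:ℝ) 1)),
      ‖(g' (a + t * s) - g' a) * s‖ ≤ t * s ^ 2 := by
    refine (ae_restrict_iff' measurableSet_uIoc).2 (Filter.Eventually.of_forall ?_)
    intro t ht
    rw [Set.uIoc_of_le (by norm_num : (0:ℝ) ≤ 1)] at ht
    have h1 : |g' (a + t * s) - g' a| ≤ |t| * |s| := by
      have := hL.dist_le_mul (a + t * s) a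
      simpa [Real.dist_eq, abs_sub_comm, abs_mul] using this
    have : ‖(g' (a + t * s) - g' a) * s‖ = |g' (a + t * s) - g' a| * |s| := by
      simp [abs_mul]
    rw [this]
    calc |g' (a + t * s) - g' a| * |s| ≤ (|t| * |s|) * |s| := by
          exact mul_le_mul_of_nonneg_right h1 (abs_nonneg s)
      _ = t * s ^ 2 := by
          rw [abs_of_nonneg ht.1.le, mul_assoc, ← sq_abs, sq]
  have := intervalIntegral.norm_integral_le_abs_of_norm_le hb
    ((continuous_id.mul continuous_const).intervalIntegrable 0 1)
  refine this.trans ?_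
  rw [intervalIntegral.integral_mul_const, integral_id]
  rw [abs_of_nonneg (by positivity)]
  norm_num
  linarith [sq_nonneg s]

lemma zsb_taylor_two {f f' f'' : ℝ → ℝ} (hf : ∀ x, HasDerivAt f (f' x) x)
    (hf' : ∀ x, HasDerivAt f' (f'' x) x) (hL : LipschitzWith 1 f'') (a b : ℝ) :
    |f (a + b) - f a - f' a * b - f'' a * b ^ 2 / 2| ≤ |b| ^ 3 / 6 := by
  have hcf' : Continuous f' :=
    (Differentiable.continuous (fun x => (hf' x).differentiableAt))
  have key : ∀ t : ℝ, HasDerivAt (fun t => f (a + t * b)) (f' (a + t * b) * b) t := by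
    intro t
    have := (hf (a + t * b)).comp t (((hasDerivAt_id t).mul_const b).const_add a)
    simpa [Function.comp_def] using this
  have hci : Continuous fun t : ℝ => f' (a + t * b) * b := by continuity
  have hint : (∫ t in (0:ℝ)..1, f' (a + t * b) * b) = f (a + b) - f a := by
    rw [intervalIntegral.integral_eq_sub_of_hasDerivAt (fun t _ => key t)
      (hci.intervalIntegrable 0 1)]
    norm_num
  have hci2 : Continuous fun t : ℝ => (f' (a + t * b) - f' a - f'' a * (t * b)) * b := by
    continuity
  have hsplit : f (a + b) - f a - f' a * b - f'' a * b ^ 2 / 2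
      = ∫ t in (0:ℝ)..1, (f' (a + t * b) - f' a - f'' a * (t * b)) * b := by
    have e2 : (∫ t in (0:ℝ)..1, (f' a * b + f'' a * b ^ 2 * t))
        = f' a * b + f'' a * b ^ 2 / 2 := by
      have hd : ∀ t : ℝ, HasDerivAt (fun t => f' a * b * t + f'' a * b ^ 2 * t ^ 2 / 2)
          (f' a * b + f'' a * b ^ 2 * t) t := by
        intro t
        have h1 := (hasDerivAt_id t).const_mul (f' a * b)
        have h2 := ((hasDerivAt_pow 2 t).const_mul (f'' a * b ^ 2)).div_const 2
        refine (h1.add h2).congr_deriv ?_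
        simp; ring
      rw [intervalIntegral.integral_eq_sub_of_hasDerivAt (fun t _ => hd t)
        ((by continuity : Continuous fun t : ℝ => f' a * b + f'' a * b ^ 2 * t).intervalIntegrable 0 1)]
      norm_num
    have e1 : (∫ t in (0:ℝ)..1, (f' (a + t * b) - f' a - f'' a * (t * b)) * b)
        = (∫ t in (0:ℝ)..1, f' (a + t * b) * b)
          - ∫ t in (0:ℝ)..1, (f' a * b + f'' a * b ^ 2 * t) := by
      rw [← intervalIntegral.integral_sub (hci.intervalIntegrable 0 1)
        ((by continuity : Continuous fun t : ℝ => f' a * b + f'' a * b ^ 2 * t).intervalIntegrable 0 1)]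
      congr 1; ext t; ring
    rw [e1, e2, hint]; ring
  rw [hsplit, ← Real.norm_eq_abs]
  have hb : ∀ᵐ t ∂(volume.restrict (Set.uIoc (0:ℝ) 1)),
      ‖(f' (a + t * b) - f' a - f'' a * (t * b)) * b‖ ≤ t ^ 2 * (|b| ^ 3 / 2) := by
    refine (ae_restrict_iff' measurableSet_uIoc).2 (Filter.Eventually.of_forall ?_)
    intro t ht
    rw [Set.uIoc_of_le (by norm_num : (0:ℝ) ≤ 1)] at ht
    have h1 : |f' (a + t * b) - f' a - f'' a * (t * b)| ≤ (t * b) ^ 2 / 2 := by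
      simpa using zsb_taylor_one hf' hL a (t * b)
    have : ‖(f' (a + t * b) - f' a - f'' a * (t * b)) * b‖
        = |f' (a + t * b) - f' a - f'' a * (t * b)| * |b| := by simp [abs_mul]
    rw [this]
    calc |f' (a + t * b) - f' a - f'' a * (t * b)| * |b| ≤ ((t * b) ^ 2 / 2) * |b| :=
          mul_le_mul_of_nonneg_right h1 (abs_nonneg b)
      _ = t ^ 2 * (|b| ^ 3 / 2) := by
          rw [mul_pow, ← sq_abs b]; ring
  have := intervalIntegral.norm_integral_le_abs_of_norm_le hb
    (((continuous_pow 2).mul continuous_const).intervalIntegrable 0 1)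
  refine this.trans ?_
  have : (∫ t in (0:ℝ)..1, t ^ 2 * (|b| ^ 3 / 2)) = |b| ^ 3 / 6 := by
    rw [intervalIntegral.integral_mul_const, integral_pow]
    norm_num
    ring
  rw [this, abs_of_nonneg (by positivity)]

section helpers
variable {Ω : Type*} [MeasurableSpace Ω] {P : Measure Ω}

lemma zsb_abs_le (x : ℝ) : |x| ≤ 1 + |x| ^ 3 := by
  rcases le_or_gt (|x|) 1 with h | h
  · nlinarith [abs_nonneg x, pow_nonneg (abs_nonneg x) 3]
  · nlinarith [abs_nonneg x, mul_nonneg (mul_nonneg (abs_nonneg x) (sub_nonneg.2 h.le))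
      (by positivity : (0:ℝ) ≤ |x| + 1)]

lemma zsb_sq_le (x : ℝ) : x ^ 2 ≤ 1 + |x| ^ 3 := by
  rcases le_or_gt (|x|) 1 with h | h
  · nlinarith [abs_nonneg x, pow_nonneg (abs_nonneg x) 3, sq_abs x]
  · nlinarith [abs_nonneg x, sq_abs x, mul_nonneg (mul_nonneg (abs_nonneg x) (sub_nonneg.2 h.le))
      (by positivity : (0:ℝ) ≤ |x| + 1)]

variable [IsProbabilityMeasure P] {X Y : Ω → ℝ}

lemma zsb_int_self (hX : Measurable X) (h3 : Integrable (fun ω => |X ω| ^ 3) P) :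
    Integrable X P := by
  refine Integrable.mono' ((integrable_const 1).add h3) hX.aestronglyMeasurable
    (Filter.Eventually.of_forall fun ω => ?_)
  simpa [Real.norm_eq_abs] using zsb_abs_le (X ω)

lemma zsb_int_sq (hX : Measurable X) (h3 : Integrable (fun ω => |X ω| ^ 3) P) :
    Integrable (fun ω => X ω ^ 2) P := by
  refine Integrable.mono' ((integrable_const 1).add h3)
    ((hX.pow_const 2).aestronglyMeasurable) (Filter.Eventually.of_forall fun ω => ?_)
  simpa [Real.norm_eq_abs, abs_of_nonneg (sq_nonneg (X ω))] using zsb_sq_le (X ω)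

lemma zsb_int_mul (hX : Measurable X) (hY : Measurable Y)
    (hX3 : Integrable (fun ω => |X ω| ^ 3) P) (hY3 : Integrable (fun ω => |Y ω| ^ 3) P) :
    Integrable (fun ω => X ω * Y ω) P := by
  refine Integrable.mono' (((zsb_int_sq hX hX3).add (zsb_int_sq hY hY3)).div_const 2)
    ((hX.mul hY).aestronglyMeasurable) (Filter.Eventually.of_forall fun ω => ?_)
  simp only [Pi.add_apply]
  rw [Real.norm_eq_abs, abs_mul]
  nlinarith [sq_nonneg (|X ω| - |Y ω|), sq_abs (X ω), sq_abs (Y ω), abs_nonneg (X ω), abs_nonneg (Y ω)]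

lemma zsb_int_cube_add (hX : Measurable X) (hY : Measurable Y)
    (hX3 : Integrable (fun ω => |X ω| ^ 3) P) (hY3 : Integrable (fun ω => |Y ω| ^ 3) P) :
    Integrable (fun ω => |X ω + Y ω| ^ 3) P := by
  refine Integrable.mono' ((hX3.add hY3).const_mul 4)
    (((hX.add hY).abs.pow_const 3).aestronglyMeasurable)
    (Filter.Eventually.of_forall fun ω => ?_)
  simp only [Pi.add_apply]
  rw [Real.norm_eq_abs, abs_of_nonneg (pow_nonneg (abs_nonneg _) 3)]
  have h := abs_add_le (X ω) (Y ω)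
  have h3 : |X ω + Y ω| ^ 3 ≤ (|X ω| + |Y ω|) ^ 3 :=
    pow_le_pow_left₀ (abs_nonneg _) h 3
  nlinarith [h3, mul_nonneg (add_nonneg (abs_nonneg (X ω)) (abs_nonneg (Y ω)))
    (sq_nonneg (|X ω| - |Y ω|))]

lemma zsb_memLp3 (hX : Measurable X) (h3 : Integrable (fun ω => |X ω| ^ 3) P) :
    MemLp X 3 P := by
  rw [← memLp_norm_rpow_iff (q := 3) hX.aestronglyMeasurable (by norm_num) (by norm_num)]
  have h33 : (3 : ℝ≥0∞) / 3 = 1 := by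
    rw [ENNReal.div_self (by norm_num) (by norm_num)]
  rw [h33, memLp_one_iff_integrable]
  refine (integrable_congr (Filter.Eventually.of_forall fun ω => ?_)).2 h3
  show ‖X ω‖ ^ (3:ℝ≥0∞).toReal = |X ω| ^ 3
  rw [Real.norm_eq_abs, show ((3:ℝ≥0∞).toReal) = ((3:ℕ):ℝ) by simp, Real.rpow_natCast]

lemma zsb_holder (hX : Measurable X) (hY : Measurable Y)
    (hX3 : Integrable (fun ω => |X ω| ^ 3) P) (hY3 : Integrable (fun ω => |Y ω| ^ 3) P) :
    ∫ ω, X ω ^ 2 * |Y ω| ∂P ≤ norm3 P X ^ 2 * norm3 P Y := by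
  have hpq : Real.HolderConjugate (3/2) 3 := ⟨by norm_num, by norm_num, by norm_num⟩
  have h32 : ENNReal.ofReal ((3:ℝ)/2) = (3 : ℝ≥0∞) / 2 := by
    rw [ENNReal.ofReal_div_of_pos (by norm_num)]
    norm_num
  have hfL : MemLp (fun ω => X ω ^ 2) (ENNReal.ofReal (3/2)) P := by
    have h := (zsb_memLp3 hX hX3).norm_rpow_div 2
    rw [← h32] at h
    refine h.ae_eq (Filter.Eventually.of_forall fun ω => ?_)
    rw [Real.norm_eq_abs, show ((2:ℝ≥0∞).toReal) = ((2:ℕ):ℝ) by norm_num,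
      Real.rpow_natCast, sq_abs]
  have hgL : MemLp (fun ω => |Y ω|) (ENNReal.ofReal 3) P := by
    have := (zsb_memLp3 hY hY3).abs
    rwa [show ENNReal.ofReal (3:ℝ) = 3 by norm_num]
  have key := integral_mul_le_Lp_mul_Lq_of_nonneg hpq
    (Filter.Eventually.of_forall fun ω => sq_nonneg (X ω))
    (Filter.Eventually.of_forall fun ω => abs_nonneg (Y ω)) hfL hgL
  have e1 : ∫ ω, (X ω ^ 2) ^ ((3:ℝ)/2) ∂P = ∫ ω, |X ω| ^ 3 ∂P := by
    refine integral_congr_ae (Filter.Eventually.of_forall fun ω => ?_)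
    show (X ω ^ 2) ^ ((3:ℝ)/2) = |X ω| ^ 3
    rw [← sq_abs, ← Real.rpow_natCast (|X ω|) 2, ← Real.rpow_mul (abs_nonneg _),
      show ((2:ℕ):ℝ) * (3/2) = ((3:ℕ):ℝ) by norm_num, Real.rpow_natCast]
  have e2 : ∫ ω, |Y ω| ^ (3:ℝ) ∂P = ∫ ω, |Y ω| ^ 3 ∂P := by
    refine integral_congr_ae (Filter.Eventually.of_forall fun ω => ?_)
    show |Y ω| ^ (3:ℝ) = |Y ω| ^ (3:ℕ)
    rw [← Real.rpow_natCast (|Y ω|) 3]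
    norm_num
  rw [e1, e2] at key
  refine key.trans (le_of_eq ?_)
  have hXnn : (0:ℝ) ≤ ∫ ω, |X ω| ^ 3 ∂P :=
    integral_nonneg fun ω => pow_nonneg (abs_nonneg _) 3
  rw [norm3, norm3, ← Real.rpow_natCast ((∫ ω, |X ω| ^ 3 ∂P) ^ ((1:ℝ)/3)) 2,
    ← Real.rpow_mul hXnn]
  norm_num

lemma zsb_norm3_cube (hY3 : Integrable (fun ω => |Y ω| ^ 3) P) :
    norm3 P Y ^ 3 = ∫ ω, |Y ω| ^ 3 ∂P := by
  have hnn : (0:ℝ) ≤ ∫ ω, |Y ω| ^ 3 ∂P :=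
    integral_nonneg fun ω => pow_nonneg (abs_nonneg _) 3
  rw [norm3, ← Real.rpow_natCast ((∫ ω, |Y ω| ^ 3 ∂P) ^ ((1:ℝ)/3)) 3,
    ← Real.rpow_mul hnn]
  norm_num

end helpers
section main
variable {Ω : Type*} [MeasurableSpace Ω] {P : Measure Ω} [IsProbabilityMeasure P]
variable {f f' f'' : ℝ → ℝ}

lemma zsb_growth (hfd : ∀ x, HasDerivAt f (f' x) x)
    (hf'd : ∀ x, HasDerivAt f' (f'' x) x) (hL : LipschitzWith 1 f'') (x : ℝ) :
    |f x| ≤ |f 0| + |f' 0| * |x| + |f'' 0| / 2 * x ^ 2 + |x| ^ 3 / 6 := by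
  have h := zsb_taylor_two hfd hf'd hL 0 x
  rw [zero_add] at h
  have h1 : |f x| ≤ |f x - f 0 - f' 0 * x - f'' 0 * x ^ 2 / 2|
      + |f 0 + f' 0 * x + f'' 0 * x ^ 2 / 2| := by
    have := abs_add_le (f x - f 0 - f' 0 * x - f'' 0 * x ^ 2 / 2)
      (f 0 + f' 0 * x + f'' 0 * x ^ 2 / 2)
    simpa [show f x - f 0 - f' 0 * x - f'' 0 * x ^ 2 / 2
      + (f 0 + f' 0 * x + f'' 0 * x ^ 2 / 2) = f x by ring] using this
  have h2 : |f 0 + f' 0 * x + f'' 0 * x ^ 2 / 2| ≤ |f 0| + |f' 0| * |x|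
      + |f'' 0| / 2 * x ^ 2 := by
    calc |f 0 + f' 0 * x + f'' 0 * x ^ 2 / 2|
        ≤ |f 0| + |f' 0 * x| + |f'' 0 * x ^ 2 / 2| := by
          exact (abs_add_le _ _).trans (add_le_add_left (abs_add_le _ _) _)
      _ = |f 0| + |f' 0| * |x| + |f'' 0| / 2 * x ^ 2 := by
          rw [abs_mul, abs_div, abs_mul, abs_of_nonneg (sq_nonneg x)]
          norm_num; ring
  linarith

lemma zsb_int_comp {X : Ω → ℝ} (hX : Measurable X)
    (hX3 : Integrable (fun ω => |X ω| ^ 3) P)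
    (hfd : ∀ x, HasDerivAt f (f' x) x)
    (hf'd : ∀ x, HasDerivAt f' (f'' x) x) (hL : LipschitzWith 1 f'') :
    Integrable (fun ω => f (X ω)) P := by
  have hcf : Continuous f := (Differentiable.continuous fun x => (hfd x).differentiableAt)
  have hbd : Integrable (fun ω => |f 0| + |f' 0| * |X ω| + |f'' 0| / 2 * X ω ^ 2
      + |X ω| ^ 3 / 6) P := by
    exact (((integrable_const _).add
      (((zsb_int_self hX hX3).abs.const_mul _))).add
      ((zsb_int_sq hX hX3).const_mul _)).add (hX3.div_const _)
  refine Integrable.mono' hbd ((hcf.measurable.comp hX).aestronglyMeasurable)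
    (Filter.Eventually.of_forall fun ω => ?_)
  rw [Real.norm_eq_abs]
  exact zsb_growth hfd hf'd hL (X ω)

lemma zsb_pointwise (hfd : ∀ x, HasDerivAt f (f' x) x)
    (hf'd : ∀ x, HasDerivAt f' (f'' x) x) (hL : LipschitzWith 1 f'') (v w : ℝ) :
    |f (v + w) - f v - f' 0 * w - f'' 0 * (v * w + w ^ 2 / 2)|
      ≤ v ^ 2 * |w| / 2 + |v| * w ^ 2 / 2 + |w| ^ 3 / 6 := by
  have t2 := zsb_taylor_two hfd hf'd hL v w
  have t1 : |f' v - f' 0 - f'' 0 * v| ≤ v ^ 2 / 2 := by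
    have := zsb_taylor_one hf'd hL 0 v
    simpa using this
  have tL : |f'' v - f'' 0| ≤ |v| := by
    have := hL.dist_le_mul v 0
    simpa [Real.dist_eq] using this
  have hsplit : f (v + w) - f v - f' 0 * w - f'' 0 * (v * w + w ^ 2 / 2)
      = (f (v + w) - f v - f' v * w - f'' v * w ^ 2 / 2)
        + (f' v - f' 0 - f'' 0 * v) * w + (f'' v - f'' 0) * (w ^ 2 / 2) := by ring
  rw [hsplit]
  calc |f (v + w) - f v - f' v * w - f'' v * w ^ 2 / 2
        + (f' v - f' 0 - f'' 0 * v) * w + (f'' v - f'' 0) * (w ^ 2 / 2)|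
      ≤ |f (v + w) - f v - f' v * w - f'' v * w ^ 2 / 2|
        + |(f' v - f' 0 - f'' 0 * v) * w| + |(f'' v - f'' 0) * (w ^ 2 / 2)| :=
        (abs_add_le _ _).trans (add_le_add_left (abs_add_le _ _) _)
    _ ≤ |w| ^ 3 / 6 + (v ^ 2 / 2) * |w| + |v| * (w ^ 2 / 2) := by
        refine add_le_add (add_le_add t2 ?_) ?_
        · rw [abs_mul]
          exact mul_le_mul_of_nonneg_right t1 (abs_nonneg w)
        · rw [abs_mul, abs_of_nonneg (by positivity : (0:ℝ) ≤ w ^ 2 / 2)]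
          exact mul_le_mul_of_nonneg_right tL (by positivity)
    _ = v ^ 2 * |w| / 2 + |v| * w ^ 2 / 2 + |w| ^ 3 / 6 := by ring

lemma zsb_int_sq_abs {X Y : Ω → ℝ} (hX : Measurable X) (hY : Measurable Y)
    (hX3 : Integrable (fun ω => |X ω| ^ 3) P) (hY3 : Integrable (fun ω => |Y ω| ^ 3) P) :
    Integrable (fun ω => X ω ^ 2 * |Y ω|) P := by
  refine Integrable.mono' (hX3.add hY3) (((hX.pow_const 2).mul hY.abs).aestronglyMeasurable)
    (Filter.Eventually.of_forall fun ω => ?_)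
  simp only [Pi.add_apply]
  rw [Real.norm_eq_abs, abs_of_nonneg (by positivity : (0:ℝ) ≤ X ω ^ 2 * |Y ω|)]
  have := mul_nonneg (sq_nonneg (|X ω| - |Y ω|))
    (by positivity : (0:ℝ) ≤ 2 * |X ω| + |Y ω|)
  rw [← sq_abs (X ω)]
  nlinarith [pow_nonneg (abs_nonneg (X ω)) 3, pow_nonneg (abs_nonneg (Y ω)) 3]

/-- The key single-space estimate. -/
lemma zsb_key {V W : Ω → ℝ} (hV : Measurable V) (hW : Measurable W)
    (hV3 : Integrable (fun ω => |V ω| ^ 3) P) (hW3 : Integrable (fun ω => |W ω| ^ 3) P)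
    (hfd : ∀ x, HasDerivAt f (f' x) x)
    (hf'd : ∀ x, HasDerivAt f' (f'' x) x) (hL : LipschitzWith 1 f'') :
    |(∫ ω, f (V ω + W ω) ∂P) - (∫ ω, f (V ω) ∂P) - f' 0 * (∫ ω, W ω ∂P)
        - f'' 0 * (∫ ω, (V ω * W ω + W ω ^ 2 / 2) ∂P)|
      ≤ norm3 P V ^ 2 * norm3 P W / 2 + norm3 P V * norm3 P W ^ 2 / 2
        + norm3 P W ^ 3 / 6 := by
  have intW : Integrable W P := zsb_int_self hW hW3
  have intW2 : Integrable (fun ω => W ω ^ 2) P := zsb_int_sq hW hW3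
  have intVW : Integrable (fun ω => V ω * W ω) P := zsb_int_mul hV hW hV3 hW3
  have intVW2 : Integrable (fun ω => V ω * W ω + W ω ^ 2 / 2) P :=
    intVW.add (intW2.div_const 2)
  have int_fV : Integrable (fun ω => f (V ω)) P := zsb_int_comp hV hV3 hfd hf'd hL
  have int_fS : Integrable (fun ω => f (V ω + W ω)) P := by
    have := zsb_int_comp (hV.add hW) (zsb_int_cube_add hV hW hV3 hW3) hfd hf'd hL
    exact this
  set g : Ω → ℝ := fun ω => f (V ω + W ω) - f (V ω) - f' 0 * W ω
    - f'' 0 * (V ω * W ω + W ω ^ 2 / 2) with hg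
  have intB1 : Integrable (fun ω => V ω ^ 2 * |W ω|) P := zsb_int_sq_abs hV hW hV3 hW3
  have intB2 : Integrable (fun ω => W ω ^ 2 * |V ω|) P := zsb_int_sq_abs hW hV hW3 hV3
  have intB : Integrable (fun ω => V ω ^ 2 * |W ω| / 2 + W ω ^ 2 * |V ω| / 2
      + |W ω| ^ 3 / 6) P := ((intB1.div_const 2).add (intB2.div_const 2)).add (hW3.div_const 6)
  have int_g : Integrable g P :=
    ((int_fS.sub int_fV).sub (intW.const_mul (f' 0))).sub (intVW2.const_mul (f'' 0))
  have hgbd : ∀ ω, |g ω| ≤ V ω ^ 2 * |W ω| / 2 + W ω ^ 2 * |V ω| / 2 + |W ω| ^ 3 / 6 := by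
    intro ω
    have := zsb_pointwise hfd hf'd hL (V ω) (W ω)
    simpa [hg, mul_comm] using this
  have hsplit : ∫ ω, g ω ∂P = (∫ ω, f (V ω + W ω) ∂P) - (∫ ω, f (V ω) ∂P)
      - f' 0 * (∫ ω, W ω ∂P) - f'' 0 * (∫ ω, (V ω * W ω + W ω ^ 2 / 2) ∂P) := by
    have i3 : Integrable (fun ω => f (V ω + W ω) - f (V ω)) P := int_fS.sub int_fV
    have i4 : Integrable (fun ω => f (V ω + W ω) - f (V ω) - f' 0 * W ω) P :=
      i3.sub (intW.const_mul _)
    have e1 : ∫ ω, g ω ∂P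
        = (∫ ω, (f (V ω + W ω) - f (V ω) - f' 0 * W ω) ∂P)
          - ∫ ω, f'' 0 * (V ω * W ω + W ω ^ 2 / 2) ∂P :=
      integral_sub i4 (intVW2.const_mul _)
    have e2 : (∫ ω, (f (V ω + W ω) - f (V ω) - f' 0 * W ω) ∂P)
        = (∫ ω, (f (V ω + W ω) - f (V ω)) ∂P) - ∫ ω, f' 0 * W ω ∂P :=
      integral_sub i3 (intW.const_mul _)
    have e3 : (∫ ω, (f (V ω + W ω) - f (V ω)) ∂P)
        = (∫ ω, f (V ω + W ω) ∂P) - ∫ ω, f (V ω) ∂P := integral_sub int_fS int_fV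
    rw [e1, e2, e3, integral_const_mul, integral_const_mul]
  rw [← hsplit]
  calc |∫ ω, g ω ∂P| ≤ ∫ ω, |g ω| ∂P := by
        simpa [Real.norm_eq_abs] using norm_integral_le_integral_norm g (μ := P)
    _ ≤ ∫ ω, (V ω ^ 2 * |W ω| / 2 + W ω ^ 2 * |V ω| / 2 + |W ω| ^ 3 / 6) ∂P := by
        refine integral_mono int_g.abs intB ?_
        exact hgbd
    _ = (∫ ω, V ω ^ 2 * |W ω| ∂P) / 2 + (∫ ω, W ω ^ 2 * |V ω| ∂P) / 2
        + (∫ ω, |W ω| ^ 3 ∂P) / 6 := by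
        have j1 : Integrable (fun ω => V ω ^ 2 * |W ω| / 2 + W ω ^ 2 * |V ω| / 2) P :=
          (intB1.div_const 2).add (intB2.div_const 2)
        have e1 : ∫ ω, (V ω ^ 2 * |W ω| / 2 + W ω ^ 2 * |V ω| / 2 + |W ω| ^ 3 / 6) ∂P
            = (∫ ω, (V ω ^ 2 * |W ω| / 2 + W ω ^ 2 * |V ω| / 2) ∂P)
              + ∫ ω, |W ω| ^ 3 / 6 ∂P := integral_add j1 (hW3.div_const 6)
        have e2 : (∫ ω, (V ω ^ 2 * |W ω| / 2 + W ω ^ 2 * |V ω| / 2) ∂P)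
            = (∫ ω, V ω ^ 2 * |W ω| / 2 ∂P) + ∫ ω, W ω ^ 2 * |V ω| / 2 ∂P :=
          integral_add (intB1.div_const 2) (intB2.div_const 2)
        rw [e1, e2, integral_div, integral_div, integral_div]
    _ ≤ norm3 P V ^ 2 * norm3 P W / 2 + norm3 P V * norm3 P W ^ 2 / 2
        + norm3 P W ^ 3 / 6 := by
        have h1 := zsb_holder hV hW hV3 hW3
        have h2 := zsb_holder hW hV hW3 hV3
        have h3 := zsb_norm3_cube (P := P) hW3
        have := h3.symm
        rw [mul_comm (norm3 P V)] at *
        linarith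
end main

section s2
variable {Ω : Type*} [MeasurableSpace Ω] {P : Measure Ω} [IsProbabilityMeasure P]
variable {f f' f'' : ℝ → ℝ}

lemma zsb_decomp {X : Ω → ℝ} (hX : Measurable X)
    (hX3 : Integrable (fun ω => |X ω| ^ 3) P)
    (hfd : ∀ x, HasDerivAt f (f' x) x)
    (hf'd : ∀ x, HasDerivAt f' (f'' x) x) (hL : LipschitzWith 1 f'') :
    |(∫ ω, f (X ω) ∂P) - f 0 - f' 0 * (∫ ω, X ω ∂P)
        - f'' 0 * (∫ ω, X ω ^ 2 ∂P) / 2|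
      ≤ (∫ ω, |X ω| ^ 3 ∂P) / 6 := by
  have intX : Integrable X P := zsb_int_self hX hX3
  have intX2 : Integrable (fun ω => X ω ^ 2) P := zsb_int_sq hX hX3
  have int_fX : Integrable (fun ω => f (X ω)) P := zsb_int_comp hX hX3 hfd hf'd hL
  set r : Ω → ℝ := fun ω => f (X ω) - f 0 - f' 0 * X ω - f'' 0 * X ω ^ 2 / 2 with hr
  have i1 : Integrable (fun ω => f (X ω) - f 0) P := int_fX.sub (integrable_const _)
  have i2 : Integrable (fun ω => f (X ω) - f 0 - f' 0 * X ω) P :=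
    i1.sub (intX.const_mul _)
  have int_r : Integrable r P := i2.sub ((intX2.const_mul _).div_const 2)
  have hrbd : ∀ ω, |r ω| ≤ |X ω| ^ 3 / 6 := by
    intro ω
    have := zsb_taylor_two hfd hf'd hL 0 (X ω)
    simpa [hr] using this
  have hsplit : ∫ ω, r ω ∂P = (∫ ω, f (X ω) ∂P) - f 0 - f' 0 * (∫ ω, X ω ∂P)
      - f'' 0 * (∫ ω, X ω ^ 2 ∂P) / 2 := by
    have e1 : ∫ ω, r ω ∂P = (∫ ω, (f (X ω) - f 0 - f' 0 * X ω) ∂P)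
        - ∫ ω, f'' 0 * X ω ^ 2 / 2 ∂P :=
      integral_sub i2 ((intX2.const_mul _).div_const 2)
    have e2 : (∫ ω, (f (X ω) - f 0 - f' 0 * X ω) ∂P)
        = (∫ ω, (f (X ω) - f 0) ∂P) - ∫ ω, f' 0 * X ω ∂P :=
      integral_sub i1 (intX.const_mul _)
    have e3 : (∫ ω, (f (X ω) - f 0) ∂P)
        = (∫ ω, f (X ω) ∂P) - ∫ ω, (f 0 : ℝ) ∂P := integral_sub int_fX (integrable_const _)
    have e4 : ∫ ω, (f 0 : ℝ) ∂P = f 0 := by simp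
    have e5 : ∫ ω, f'' 0 * X ω ^ 2 / 2 ∂P = f'' 0 * (∫ ω, X ω ^ 2 ∂P) / 2 := by
      rw [integral_div, integral_const_mul]
    rw [e1, e2, e3, e4, e5, integral_const_mul]
  rw [← hsplit]
  calc |∫ ω, r ω ∂P| ≤ ∫ ω, |r ω| ∂P := by
        simpa [Real.norm_eq_abs] using norm_integral_le_integral_norm r (μ := P)
    _ ≤ ∫ ω, |X ω| ^ 3 / 6 ∂P := integral_mono int_r.abs (hX3.div_const 6) hrbd
    _ = (∫ ω, |X ω| ^ 3 ∂P) / 6 := integral_div _ _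

lemma zsb_expand_sq {V W : Ω → ℝ} (hV : Measurable V) (hW : Measurable W)
    (hV3 : Integrable (fun ω => |V ω| ^ 3) P) (hW3 : Integrable (fun ω => |W ω| ^ 3) P) :
    ∫ ω, (V ω + W ω) ^ 2 ∂P = (∫ ω, V ω ^ 2 ∂P) + 2 * (∫ ω, V ω * W ω ∂P)
      + ∫ ω, W ω ^ 2 ∂P := by
  have intV2 := zsb_int_sq hV hV3
  have intW2 := zsb_int_sq hW hW3
  have intVW := zsb_int_mul hV hW hV3 hW3
  have h : (fun ω => (V ω + W ω) ^ 2)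
      = fun ω => V ω ^ 2 + (2 * (V ω * W ω) + W ω ^ 2) := by ext ω; ring
  have j1 : Integrable (fun ω => 2 * (V ω * W ω) + W ω ^ 2) P :=
    (intVW.const_mul 2).add intW2
  have e1 : ∫ ω, (V ω ^ 2 + (2 * (V ω * W ω) + W ω ^ 2)) ∂P
      = (∫ ω, V ω ^ 2 ∂P) + ∫ ω, (2 * (V ω * W ω) + W ω ^ 2) ∂P := integral_add intV2 j1
  have e2 : ∫ ω, (2 * (V ω * W ω) + W ω ^ 2) ∂P
      = (∫ ω, 2 * (V ω * W ω) ∂P) + ∫ ω, W ω ^ 2 ∂P :=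
    integral_add (intVW.const_mul 2) intW2
  rw [h, e1, e2, integral_const_mul]
  ring

end s2

lemma zsb_abs_sub' (x y : ℝ) : |x - y| ≤ |x| + |y| := by
  rw [sub_eq_add_neg]
  exact (abs_add_le _ _).trans_eq (by rw [abs_neg])

lemma zsb_F3_nonempty : Nonempty F3 := by
  refine ⟨⟨fun _ => (0:ℝ), contDiff_const, ?_⟩⟩
  simp only [deriv_const']
  intro x y
  simp

lemma zsb_derivs {f : ℝ → ℝ} (hf2 : ContDiff ℝ 2 f) :
    (∀ x, HasDerivAt f (deriv f x) x) ∧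
      (∀ x, HasDerivAt (deriv f) (deriv (deriv f) x) x) := by
  have h2 : ContDiff ℝ (1 + 1) f := by norm_num; exact hf2
  have hd1 : Differentiable ℝ f := hf2.differentiable (by norm_num)
  have hc1 : ContDiff ℝ 1 (deriv f) := (contDiff_succ_iff_deriv.mp h2).2.2
  have hd2 : Differentiable ℝ (deriv f) := hc1.differentiable (by norm_num)
  exact ⟨fun x => (hd1 x).hasDerivAt, fun x => (hd2 x).hasDerivAt⟩

/-- Lemma 2.1: a substitute for the subadditivity of `ζ₃` under sums when
independence fails. -/
theorem zeta3_sum_bound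
    {Ω₁ Ω₂ : Type*} [MeasurableSpace Ω₁] [MeasurableSpace Ω₂]
    (P₁ : Measure Ω₁) (P₂ : Measure Ω₂)
    [IsProbabilityMeasure P₁] [IsProbabilityMeasure P₂]
    (V₁ W₁ : Ω₁ → ℝ) (V₂ W₂ : Ω₂ → ℝ)
    (hV₁ : Measurable V₁) (hW₁ : Measurable W₁)
    (hV₂ : Measurable V₂) (hW₂ : Measurable W₂)
    (hV₁3 : Integrable (fun ω => |V₁ ω| ^ 3) P₁)
    (hW₁3 : Integrable (fun ω => |W₁ ω| ^ 3) P₁)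
    (hV₂3 : Integrable (fun ω => |V₂ ω| ^ 3) P₂)
    (hW₂3 : Integrable (fun ω => |W₂ ω| ^ 3) P₂)
    (hmeanV : ∫ ω, V₁ ω ∂P₁ = ∫ ω, V₂ ω ∂P₂)
    (hvarV : ProbabilityTheory.variance V₁ P₁ = ProbabilityTheory.variance V₂ P₂)
    (hmeanS : ∫ ω, V₁ ω + W₁ ω ∂P₁ = ∫ ω, V₂ ω + W₂ ω ∂P₂)
    (hvarS : ProbabilityTheory.variance (fun ω => V₁ ω + W₁ ω) P₁
      = ProbabilityTheory.variance (fun ω => V₂ ω + W₂ ω) P₂) :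
    zeta3 (Measure.map (fun ω => V₁ ω + W₁ ω) P₁)
        (Measure.map (fun ω => V₂ ω + W₂ ω) P₂)
      ≤ zeta3 (Measure.map V₁ P₁) (Measure.map V₂ P₂)
        + (norm3 P₁ V₁ ^ 2 * norm3 P₁ W₁ / 2
            + norm3 P₁ V₁ * norm3 P₁ W₁ ^ 2 / 2 + norm3 P₁ W₁ ^ 3 / 6)
        + (norm3 P₂ V₂ ^ 2 * norm3 P₂ W₂ / 2
            + norm3 P₂ V₂ * norm3 P₂ W₂ ^ 2 / 2 + norm3 P₂ W₂ ^ 3 / 6) := by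
  haveI : Nonempty F3 := zsb_F3_nonempty
  -- integrabilities
  have intV₁ : Integrable V₁ P₁ := zsb_int_self hV₁ hV₁3
  have intW₁ : Integrable W₁ P₁ := zsb_int_self hW₁ hW₁3
  have intV₂ : Integrable V₂ P₂ := zsb_int_self hV₂ hV₂3
  have intW₂ : Integrable W₂ P₂ := zsb_int_self hW₂ hW₂3
  have intVW₁ : Integrable (fun ω => V₁ ω * W₁ ω) P₁ := zsb_int_mul hV₁ hW₁ hV₁3 hW₁3
  have intVW₂ : Integrable (fun ω => V₂ ω * W₂ ω) P₂ := zsb_int_mul hV₂ hW₂ hV₂3 hW₂3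
  have intW₁2 : Integrable (fun ω => W₁ ω ^ 2) P₁ := zsb_int_sq hW₁ hW₁3
  have intW₂2 : Integrable (fun ω => W₂ ω ^ 2) P₂ := zsb_int_sq hW₂ hW₂3
  -- mean of W matches
  have hmeanW : ∫ ω, W₁ ω ∂P₁ = ∫ ω, W₂ ω ∂P₂ := by
    have e1 : ∫ ω, (V₁ ω + W₁ ω) ∂P₁ = (∫ ω, V₁ ω ∂P₁) + ∫ ω, W₁ ω ∂P₁ :=
      integral_add intV₁ intW₁
    have e2 : ∫ ω, (V₂ ω + W₂ ω) ∂P₂ = (∫ ω, V₂ ω ∂P₂) + ∫ ω, W₂ ω ∂P₂ :=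
      integral_add intV₂ intW₂
    rw [e1, e2] at hmeanS
    linarith
  -- second moments of V match
  have mem2V₁ : MemLp V₁ 2 P₁ :=
    (zsb_memLp3 hV₁ hV₁3).mono_exponent (by norm_num)
  have mem2V₂ : MemLp V₂ 2 P₂ :=
    (zsb_memLp3 hV₂ hV₂3).mono_exponent (by norm_num)
  have mem2S₁ : MemLp (fun ω => V₁ ω + W₁ ω) 2 P₁ :=
    ((zsb_memLp3 hV₁ hV₁3).add (zsb_memLp3 hW₁ hW₁3)).mono_exponent (by norm_num)
  have mem2S₂ : MemLp (fun ω => V₂ ω + W₂ ω) 2 P₂ :=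
    ((zsb_memLp3 hV₂ hV₂3).add (zsb_memLp3 hW₂ hW₂3)).mono_exponent (by norm_num)
  have hvV₁ := ProbabilityTheory.variance_eq_sub mem2V₁
  have hvV₂ := ProbabilityTheory.variance_eq_sub mem2V₂
  have hvS₁ := ProbabilityTheory.variance_eq_sub mem2S₁
  have hvS₂ := ProbabilityTheory.variance_eq_sub mem2S₂
  simp only [Pi.pow_apply] at hvV₁ hvV₂ hvS₁ hvS₂
  have hEV2 : ∫ ω, V₁ ω ^ 2 ∂P₁ = ∫ ω, V₂ ω ^ 2 ∂P₂ := by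
    rw [hvV₁, hvV₂, hmeanV] at hvarV
    linarith
  -- cross/second moment combination matches
  have hκ : ∫ ω, (V₁ ω * W₁ ω + W₁ ω ^ 2 / 2) ∂P₁
      = ∫ ω, (V₂ ω * W₂ ω + W₂ ω ^ 2 / 2) ∂P₂ := by
    have hx₁ := zsb_expand_sq (P := P₁) hV₁ hW₁ hV₁3 hW₁3
    have hx₂ := zsb_expand_sq (P := P₂) hV₂ hW₂ hV₂3 hW₂3
    rw [hvS₁, hvS₂, hmeanS] at hvarS
    rw [hx₁, hx₂] at hvarS
    have e1 : ∫ ω, (V₁ ω * W₁ ω + W₁ ω ^ 2 / 2) ∂P₁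
        = (∫ ω, V₁ ω * W₁ ω ∂P₁) + (∫ ω, W₁ ω ^ 2 ∂P₁) / 2 := by
      rw [integral_add intVW₁ (intW₁2.div_const 2), integral_div]
    have e2 : ∫ ω, (V₂ ω * W₂ ω + W₂ ω ^ 2 / 2) ∂P₂
        = (∫ ω, V₂ ω * W₂ ω ∂P₂) + (∫ ω, W₂ ω ^ 2 ∂P₂) / 2 := by
      rw [integral_add intVW₂ (intW₂2.div_const 2), integral_div]
    rw [e1, e2]
    linarith
  -- bounded above family for the V-distance
  have hBdd : BddAbove (Set.range fun g : F3 =>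
      |(∫ x, g.1 x ∂(Measure.map V₁ P₁)) - ∫ x, g.1 x ∂(Measure.map V₂ P₂)|) := by
    refine ⟨(∫ ω, |V₁ ω| ^ 3 ∂P₁) / 6 + (∫ ω, |V₂ ω| ^ 3 ∂P₂) / 6, ?_⟩
    rintro x ⟨⟨f, hf2, hfL⟩, rfl⟩
    obtain ⟨hfd, hf'd⟩ := zsb_derivs hf2
    have hcf : Continuous f := (Differentiable.continuous fun x => (hfd x).differentiableAt)
    have m1 : ∫ x, f x ∂(Measure.map V₁ P₁) = ∫ ω, f (V₁ ω) ∂P₁ :=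
      integral_map hV₁.aemeasurable hcf.aestronglyMeasurable
    have m2 : ∫ x, f x ∂(Measure.map V₂ P₂) = ∫ ω, f (V₂ ω) ∂P₂ :=
      integral_map hV₂.aemeasurable hcf.aestronglyMeasurable
    simp only [m1, m2]
    have d₁ := zsb_decomp (P := P₁) hV₁ hV₁3 hfd hf'd hfL
    have d₂ := zsb_decomp (P := P₂) hV₂ hV₂3 hfd hf'd hfL
    have hc1 : deriv f 0 * (∫ ω, V₁ ω ∂P₁) = deriv f 0 * ∫ ω, V₂ ω ∂P₂ := by
      rw [hmeanV]
    have hc2 : deriv (deriv f) 0 * (∫ ω, V₁ ω ^ 2 ∂P₁) / 2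
        = deriv (deriv f) 0 * (∫ ω, V₂ ω ^ 2 ∂P₂) / 2 := by rw [hEV2]
    have hiden : (∫ ω, f (V₁ ω) ∂P₁) - ∫ ω, f (V₂ ω) ∂P₂
        = ((∫ ω, f (V₁ ω) ∂P₁) - f 0 - deriv f 0 * (∫ ω, V₁ ω ∂P₁)
            - deriv (deriv f) 0 * (∫ ω, V₁ ω ^ 2 ∂P₁) / 2)
          - ((∫ ω, f (V₂ ω) ∂P₂) - f 0 - deriv f 0 * (∫ ω, V₂ ω ∂P₂)
            - deriv (deriv f) 0 * (∫ ω, V₂ ω ^ 2 ∂P₂) / 2) := by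
      linarith
    rw [hiden]
    exact (zsb_abs_sub' _ _).trans (add_le_add d₁ d₂)
  -- main bound, function by function
  unfold zeta3
  refine ciSup_le fun g => ?_
  obtain ⟨f, hf2, hfL⟩ := g
  obtain ⟨hfd, hf'd⟩ := zsb_derivs hf2
  have hcf : Continuous f := (Differentiable.continuous fun x => (hfd x).differentiableAt)
  have m1 : ∫ x, f x ∂(Measure.map (fun ω => V₁ ω + W₁ ω) P₁)
      = ∫ ω, f (V₁ ω + W₁ ω) ∂P₁ :=
    integral_map (hV₁.add hW₁).aemeasurable hcf.aestronglyMeasurable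
  have m2 : ∫ x, f x ∂(Measure.map (fun ω => V₂ ω + W₂ ω) P₂)
      = ∫ ω, f (V₂ ω + W₂ ω) ∂P₂ :=
    integral_map (hV₂.add hW₂).aemeasurable hcf.aestronglyMeasurable
  simp only [m1, m2]
  have k₁ := zsb_key (P := P₁) hV₁ hW₁ hV₁3 hW₁3 hfd hf'd hfL
  have k₂ := zsb_key (P := P₂) hV₂ hW₂ hV₂3 hW₂3 hfd hf'd hfL
  have hVd : |(∫ ω, f (V₁ ω) ∂P₁) - ∫ ω, f (V₂ ω) ∂P₂|
      ≤ zeta3 (Measure.map V₁ P₁) (Measure.map V₂ P₂) := by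
    have m3 : ∫ x, f x ∂(Measure.map V₁ P₁) = ∫ ω, f (V₁ ω) ∂P₁ :=
      integral_map hV₁.aemeasurable hcf.aestronglyMeasurable
    have m4 : ∫ x, f x ∂(Measure.map V₂ P₂) = ∫ ω, f (V₂ ω) ∂P₂ :=
      integral_map hV₂.aemeasurable hcf.aestronglyMeasurable
    have := le_ciSup hBdd (⟨f, hf2, hfL⟩ : F3)
    rw [m3, m4] at this
    exact this
  set D₁ := (∫ ω, f (V₁ ω + W₁ ω) ∂P₁) - (∫ ω, f (V₁ ω) ∂P₁)
      - deriv f 0 * (∫ ω, W₁ ω ∂P₁)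
      - deriv (deriv f) 0 * (∫ ω, (V₁ ω * W₁ ω + W₁ ω ^ 2 / 2) ∂P₁) with hD₁
  set D₂ := (∫ ω, f (V₂ ω + W₂ ω) ∂P₂) - (∫ ω, f (V₂ ω) ∂P₂)
      - deriv f 0 * (∫ ω, W₂ ω ∂P₂)
      - deriv (deriv f) 0 * (∫ ω, (V₂ ω * W₂ ω + W₂ ω ^ 2 / 2) ∂P₂) with hD₂
  have hc1 : deriv f 0 * (∫ ω, W₁ ω ∂P₁) = deriv f 0 * ∫ ω, W₂ ω ∂P₂ := by rw [hmeanW]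
  have hc2 : deriv (deriv f) 0 * (∫ ω, (V₁ ω * W₁ ω + W₁ ω ^ 2 / 2) ∂P₁)
      = deriv (deriv f) 0 * ∫ ω, (V₂ ω * W₂ ω + W₂ ω ^ 2 / 2) ∂P₂ := by rw [hκ]
  have hiden : (∫ ω, f (V₁ ω + W₁ ω) ∂P₁) - ∫ ω, f (V₂ ω + W₂ ω) ∂P₂
      = ((∫ ω, f (V₁ ω) ∂P₁) - ∫ ω, f (V₂ ω) ∂P₂) + D₁ + -D₂ := by
    rw [hD₁, hD₂]
    linarith
  rw [hiden]
  calc |((∫ ω, f (V₁ ω) ∂P₁) - ∫ ω, f (V₂ ω) ∂P₂) + D₁ + -D₂|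
      ≤ |(∫ ω, f (V₁ ω) ∂P₁) - ∫ ω, f (V₂ ω) ∂P₂| + |D₁| + |-D₂| :=
        (abs_add_le _ _).trans (add_le_add_left (abs_add_le _ _) _)
    _ ≤ zeta3 (Measure.map V₁ P₁) (Measure.map V₂ P₂)
        + (norm3 P₁ V₁ ^ 2 * norm3 P₁ W₁ / 2
            + norm3 P₁ V₁ * norm3 P₁ W₁ ^ 2 / 2 + norm3 P₁ W₁ ^ 3 / 6)
        + (norm3 P₂ V₂ ^ 2 * norm3 P₂ W₂ / 2
            + norm3 P₂ V₂ * norm3 P₂ W₂ ^ 2 / 2 + norm3 P₂ W₂ ^ 3 / 6) := by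
        rw [abs_neg]
        exact add_le_add (add_le_add hVd k₁) k₂
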